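/- arXiv:2205.15462 — 3 statements merged into one kernel-verified Lean document; each statement's English description precedes it below -/
import Mathlib

section
/- Let S be a type, r : S → S → Prop a directed graph, h a natural number, s₀ ∈ S, and let r' be the depth-h unrolling of r on S × Fin (h+1). Then for every s ∈ S and k ≤ h, the vertex (s, k) is reachable from (s₀, 0) by a directed walk in r' if and only if there is a directed walk of length exactly k from s₀ to s in r; moreover any such walk in r' has length exactly k. -/
/-- A directed walk of length `n` along `f` in the directed graph `r`. -/
def IsWalk {V : Type*} (r : V → V → Prop) (f : ℕ → V) (n : ℕ) : Prop :=
  ∀ i < n, r (f i) (f (i + 1))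

/-- The depth-`h` unrolling of a directed graph `r` on `S`. -/
def Unroll {S : Type*} (r : S → S → Prop) (h : ℕ) :
    S × Fin (h + 1) → S × Fin (h + 1) → Prop :=
  fun p q => r p.1 q.1 ∧ (q.2 : ℕ) = (p.2 : ℕ) + 1

/-- Walks in the depth-`h` unrolling from `(s₀, 0)` to `(s, k)` correspond
exactly to walks of length `k` from `s₀` to `s` in the original graph, and any
such walk in the unrolling has length exactly `k`. -/
theorem unroll_reachability {S : Type*} (r : S → S → Prop) (h : ℕ) (s₀ : S) :
    ∀ (s : S) (k : ℕ) (hk : k ≤ h),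
      ((∃ (f : ℕ → S × Fin (h + 1)) (n : ℕ),
          f 0 = (s₀, (⟨0, Nat.succ_pos h⟩ : Fin (h + 1))) ∧
          f n = (s, (⟨k, Nat.lt_succ_of_le hk⟩ : Fin (h + 1))) ∧
          IsWalk (Unroll r h) f n) ↔
        (∃ g : ℕ → S, g 0 = s₀ ∧ g k = s ∧ IsWalk r g k)) ∧
      (∀ (f : ℕ → S × Fin (h + 1)) (n : ℕ),
          f 0 = (s₀, (⟨0, Nat.succ_pos h⟩ : Fin (h + 1))) →
          f n = (s, (⟨k, Nat.lt_succ_of_le hk⟩ : Fin (h + 1))) →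
          IsWalk (Unroll r h) f n → n = k) := by
  intro s k hk
  have snd_eq : ∀ (f : ℕ → S × Fin (h + 1)) (n : ℕ),
      ((f 0).2 : ℕ) = 0 → IsWalk (Unroll r h) f n →
      ∀ i ≤ n, ((f i).2 : ℕ) = i := by
    intro f n h0 hw i
    induction i with
    | zero => intro _; exact h0
    | succ j ih =>
      intro hle
      have hj : j < n := Nat.lt_of_succ_le hle
      have := (hw j hj).2
      rw [this, ih (le_of_lt hj)]
  constructor
  · constructor
    · rintro ⟨f, n, hf0, hfn, hw⟩
      have hnk : n = k := by
        have := snd_eq f n (by rw [hf0]) hw n le_rfl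
        rw [hfn] at this; simpa using this.symm
      subst hnk
      refine ⟨fun i => (f i).1, by simp [hf0], by simp [hfn], fun i hi => (hw i hi).1⟩
    · rintro ⟨g, hg0, hgk, hw⟩
      refine ⟨fun i => (g i, ⟨min i k, Nat.lt_succ_of_le (le_trans (min_le_right _ _) hk)⟩),
        k, by simp [hg0], by simp [hgk], fun i hi => ?_⟩
      refine ⟨hw i hi, ?_⟩
      simp [Nat.min_eq_left (le_of_lt hi), Nat.min_eq_left (Nat.succ_le_of_lt hi)]
  · intro f n hf0 hfn hw
    have := snd_eq f n (by rw [hf0]) hw n le_rfl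
    rw [hfn] at this; simpa using this.symm
end

section
/- Let S and A be nonempty finite types, T : S → A → S → ℝ with T s a s' ≥ 0 and ∑_{s'} T s a s' = 1 for all s, a, R : S → A → S → ℝ, and 0 ≤ γ ≤ 1. Define the finite-horizon value functions V : ℕ → S → ℝ by V 0 s = 0 and V (k+1) s = max_{a ∈ A} ∑_{s' ∈ S} T s a s' · (R s a s' + γ · V k s'). Fix a horizon h and define the depth-h unrolled MDP on state set S × Fin (h+1) with transitions T' (s,k) a (s',k') = T s a s' if k' = k+1 ≤ h and 0 otherwise, rewards R' (s,k) a (s',k') = R s a s', and value functions V' : ℕ → S × Fin (h+1) → ℝ by V' 0 = 0 and V' (j+1) (s,k) = max_{a ∈ A} ∑_{(s',k') ∈ S × Fin (h+1)} T' (s,k) a (s',k') · (R' (s,k) a (s',k') + γ · V' j (s',k')). Then for all k ≤ h, all j ≤ h − k, and all s ∈ S: V' j (s, k) = V j s. In particular V' h (s₀, 0) = V h s₀ for every start state s₀. -/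
open Finset in
/-- Lemma 1 (value equivalence): the finite-horizon value functions of the
depth-`h` unrolled MDP agree with those of the original MDP, `V' j (s, k) =
V j s` for all `k ≤ h` and `j ≤ h - k`; in particular
`V' h (s₀, 0) = V h s₀` for every start state `s₀`. -/
theorem unrolled_mdp_value_equivalence
    {S A : Type*} [Fintype S] [Fintype A] [Nonempty S] [Nonempty A]
    (h : ℕ) (T : S → A → S → ℝ) (R : S → A → S → ℝ) (γ : ℝ)
    (hT0 : ∀ s a s', 0 ≤ T s a s') (hT1 : ∀ s a, ∑ s' : S, T s a s' = 1)
    (hγ0 : 0 ≤ γ) (hγ1 : γ ≤ 1)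
    -- the original finite-horizon value functions
    (V : ℕ → S → ℝ)
    (hV0 : ∀ s, V 0 s = 0)
    (hV : ∀ k s, V (k + 1) s =
        univ.sup' univ_nonempty fun a : A =>
          ∑ s' : S, T s a s' * (R s a s' + γ * V k s'))
    -- transitions and rewards of the depth-`h` unrolled MDP
    (T' R' : S × Fin (h + 1) → A → S × Fin (h + 1) → ℝ)
    (hT' : ∀ p a q, T' p a q =
        if (q.2 : ℕ) = (p.2 : ℕ) + 1 then T p.1 a q.1 else 0)
    (hR' : ∀ p a q, R' p a q = R p.1 a q.1)
    -- the value functions of the unrolled MDP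
    (V' : ℕ → S × Fin (h + 1) → ℝ)
    (hV'0 : ∀ p, V' 0 p = 0)
    (hV' : ∀ j p, V' (j + 1) p =
        univ.sup' univ_nonempty fun a : A =>
          ∑ q : S × Fin (h + 1), T' p a q * (R' p a q + γ * V' j q)) :
    (∀ k : Fin (h + 1), ∀ j ≤ h - (k : ℕ), ∀ s : S, V' j (s, k) = V j s) ∧
    (∀ s₀ : S, V' h (s₀, (⟨0, Nat.succ_pos h⟩ : Fin (h + 1))) = V h s₀) := by

  have main : ∀ j : ℕ, ∀ k : Fin (h + 1), j ≤ h - (k : ℕ) → ∀ s : S,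
      V' j (s, k) = V j s := by
    intro j
    induction j with
    | zero => intro k _ s; rw [hV'0, hV0]
    | succ j ih =>
      intro k hk s
      have hk' : (k : ℕ) + 1 ≤ h := by
        have := k.isLt; omega
      set k1 : Fin (h + 1) := ⟨(k : ℕ) + 1, by omega⟩ with hk1
      rw [hV' j (s, k), hV j s]
      apply Finset.sup'_congr _ rfl
      intro a _
      rw [Fintype.sum_prod_type]
      have hsum : ∀ s' : S,
          (∑ k' : Fin (h + 1), T' (s, k) a (s', k') *
            (R' (s, k) a (s', k') + γ * V' j (s', k'))) =
          T s a s' * (R s a s' + γ * V j s') := by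
        intro s'
        rw [Finset.sum_eq_single k1]
        · rw [hT', hR']
          simp only [hk1]
          rw [if_pos trivial]
          congr 1
          rw [ih k1 (by simp [hk1]; omega) s']
        · intro b _ hb
          rw [hT']
          simp only
          rw [if_neg, zero_mul]
          intro hb'
          apply hb
          apply Fin.ext
          simpa [hk1] using hb'
        · intro hb; exact absurd (Finset.mem_univ k1) hb
      exact Finset.sum_congr rfl fun s' _ => hsum s'
  refine ⟨fun k j hj s => main j k hj s, fun s₀ => main h ⟨0, Nat.succ_pos h⟩ (by simp) s₀⟩
end

section
/- With the setup of the depth-h unrolled MDP (S, A finite nonempty; T a transition kernel; R rewards; 0 ≤ γ ≤ 1; value functions V for the original MDP and V' for the unrolled MDP defined by the Bellman recursion with V 0 = 0 and V' 0 = 0): for all k < h, all 1 ≤ j ≤ h − k, all s ∈ S, and all a ∈ A, the one-step lookahead values agree, ∑_{(s',k') ∈ S × Fin (h+1)} T' (s,k) a (s',k') · (R' (s,k) a (s',k') + γ · V' (j−1) (s',k')) = ∑_{s' ∈ S} T s a s' · (R s a s' + γ · V (j−1) s'); consequently an action a attains the maximum in the Bellman recursion for V' j at state (s,k) if and only if it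 attains the maximum in the Bellman recursion for V j at state s. -/
open Finset in
/-- One-step lookahead equivalence for the depth-`h` unrolled MDP: for `k < h`
and `1 ≤ j ≤ h - k`, the Q-values of the unrolled MDP at `(s, k)` agree with
those of the original MDP at `s`, and hence an action attains the maximum in
the Bellman recursion for `V' j` at `(s, k)` iff it attains the maximum in the
Bellman recursion for `V j` at `s`. -/
theorem unrolled_mdp_action_selection_equivalence
    {S A : Type*} [Fintype S] [Fintype A] [Nonempty S] [Nonempty A]
    (h : ℕ) (T : S → A → S → ℝ) (R : S → A → S → ℝ) (γ : ℝ)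
    (hT0 : ∀ s a s', 0 ≤ T s a s') (hT1 : ∀ s a, ∑ s' : S, T s a s' = 1)
    (hγ0 : 0 ≤ γ) (hγ1 : γ ≤ 1)
    -- the original finite-horizon value functions
    (V : ℕ → S → ℝ)
    (hV0 : ∀ s, V 0 s = 0)
    (hV : ∀ k s, V (k + 1) s =
        univ.sup' univ_nonempty fun a : A =>
          ∑ s' : S, T s a s' * (R s a s' + γ * V k s'))
    -- transitions and rewards of the depth-`h` unrolled MDP
    (T' R' : S × Fin (h + 1) → A → S × Fin (h + 1) → ℝ)
    (hT' : ∀ p a q, T' p a q =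
        if (q.2 : ℕ) = (p.2 : ℕ) + 1 then T p.1 a q.1 else 0)
    (hR' : ∀ p a q, R' p a q = R p.1 a q.1)
    -- the value functions of the unrolled MDP
    (V' : ℕ → S × Fin (h + 1) → ℝ)
    (hV'0 : ∀ p, V' 0 p = 0)
    (hV' : ∀ j p, V' (j + 1) p =
        univ.sup' univ_nonempty fun a : A =>
          ∑ q : S × Fin (h + 1), T' p a q * (R' p a q + γ * V' j q)) :
    ∀ k : Fin (h + 1), (k : ℕ) < h → ∀ j, 1 ≤ j → j ≤ h - (k : ℕ) →
      ∀ (s : S) (a : A),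
        (∑ q : S × Fin (h + 1), T' (s, k) a q * (R' (s, k) a q + γ * V' (j - 1) q) =
          ∑ s' : S, T s a s' * (R s a s' + γ * V (j - 1) s')) ∧
        ((∑ q : S × Fin (h + 1), T' (s, k) a q * (R' (s, k) a q + γ * V' (j - 1) q) =
            univ.sup' univ_nonempty fun a' : A =>
              ∑ q : S × Fin (h + 1), T' (s, k) a' q * (R' (s, k) a' q + γ * V' (j - 1) q)) ↔
          (∑ s' : S, T s a s' * (R s a s' + γ * V (j - 1) s') =
            univ.sup' univ_nonempty fun a' : A =>
              ∑ s' : S, T s a' s' * (R s a' s' + γ * V (j - 1) s'))) := by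

  -- Reduce a sum over the product to a sum over `S` at layer `k+1`.
  have hsum : ∀ (k : Fin (h + 1)) (_hk : (k : ℕ) < h), ∀ (s : S) (a : A)
      (f : S × Fin (h + 1) → ℝ),
      ∑ q : S × Fin (h + 1), T' (s, k) a q * (R' (s, k) a q + γ * f q) =
        ∑ s' : S, T s a s' * (R s a s' + γ * f (s', ⟨(k : ℕ) + 1, by omega⟩)) := by
    intro k hk s a f
    rw [Fintype.sum_prod_type]
    refine Finset.sum_congr rfl fun s' _ => ?_
    rw [Finset.sum_eq_single (⟨(k : ℕ) + 1, by omega⟩ : Fin (h + 1))]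
    · simp [hT', hR']
    · intro b _ hb
      have : (b : ℕ) ≠ (k : ℕ) + 1 := by
        intro hc; exact hb (Fin.ext hc)
      simp [hT', this]
    · simp
  -- Value functions agree within the allowed depth.
  have hVeq : ∀ j, ∀ (k : Fin (h + 1)) (_hjk : j ≤ h - (k : ℕ)), ∀ s, V' j (s, k) = V j s := by
    intro j
    induction j with
    | zero => intro k _ s; rw [hV'0, hV0]
    | succ j ih =>
      intro k hjk s
      have hk : (k : ℕ) < h := by omega
      rw [hV' j (s, k), hV j s]
      refine Finset.sup'_congr _ rfl fun a _ => ?_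
      rw [hsum k hk s a (V' j)]
      refine Finset.sum_congr rfl fun s' _ => ?_
      rw [ih ⟨(k : ℕ) + 1, by omega⟩ (by simp; omega) s']
  intro k hk j hj1 hj2 s a
  have key : ∀ a' : A,
      ∑ q : S × Fin (h + 1), T' (s, k) a' q * (R' (s, k) a' q + γ * V' (j - 1) q) =
        ∑ s' : S, T s a' s' * (R s a' s' + γ * V (j - 1) s') := by
    intro a'
    rw [hsum k hk s a' (V' (j - 1))]
    refine Finset.sum_congr rfl fun s' _ => ?_
    rw [hVeq (j - 1) ⟨(k : ℕ) + 1, by omega⟩ (by simp; omega) s']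
  have hsup : (Finset.univ.sup' Finset.univ_nonempty fun a' : A =>
      ∑ q : S × Fin (h + 1), T' (s, k) a' q * (R' (s, k) a' q + γ * V' (j - 1) q)) =
      Finset.univ.sup' Finset.univ_nonempty fun a' : A =>
        ∑ s' : S, T s a' s' * (R s a' s' + γ * V (j - 1) s') :=
    Finset.sup'_congr _ rfl fun a' _ => key a'
  exact ⟨key a, by rw [key a, hsup]⟩
end
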